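/- The messenger's proper time upon arriving at the city during his n-th tour equals T^{City}_{n,Mes} = (√(1−V_m²/c²)/√(1−V_c²/c²))·(1 + q/(1+q))·T₁(1+2q)^{n-1} + (1 − √(1−V_m²/c²)/√(1−V_c²/c²))·T₁. -/
import Mathlib

theorem buzzati_proper_time_at_city (c Vc Vm T₁ q : ℝ)
    (hVc : 0 < Vc) (hVm : Vc < Vm) (hc : Vm < c) (hT : 0 < T₁)
    (hq : q = Vc / (Vm - Vc)) (n : ℕ) (hn : 1 ≤ n)
    (sc sm TnCity TnMes : ℝ)
    (hsc : sc = Real.sqrt (1 - Vc ^ 2 / c ^ 2))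
    (hsm : sm = Real.sqrt (1 - Vm ^ 2 / c ^ 2))
    (hcity : TnCity = T₁ * (1 + 2 * q) ^ (n - 1) / sc)
    (hmes : TnMes = (sm / sc) * T₁ * (1 + 2 * q) ^ (n - 1) + (1 - sm / sc) * T₁) :
    TnMes + sm * (q / (1 + q)) * TnCity
      = (sm / sc) * (1 + q / (1 + q)) * T₁ * (1 + 2 * q) ^ (n - 1)
        + (1 - sm / sc) * T₁ := by
  have hc0 : 0 < c := lt_trans (lt_trans hVc hVm) hc
  have hVc2 : Vc ^ 2 < c ^ 2 := by nlinarith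
  have hsc0 : 0 < sc := by
    rw [hsc]; apply Real.sqrt_pos.2; rw [sub_pos, div_lt_one (by positivity)]; exact hVc2
  have hq0 : 0 < q := by rw [hq]; exact div_pos hVc (sub_pos.2 hVm)
  have h1q : (1 : ℝ) + q ≠ 0 := by positivity
  have hscne : sc ≠ 0 := ne_of_gt hsc0
  subst hcity hmes
  field_simp
  ring
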